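/- For all q in [1/2, 1), all θ in [0,1], with z = qθ + (1-q)(1-θ): the inequality θ(1-θ)(2q-1)(1-q)/(z(1-z)) ≤ (h(z) - h(q))/(q·log(q/(1-q))) holds (interpreting both sides as 0 when q = 1/2), where h is the binary entropy function. -/

import Mathlib

noncomputable def h (x : ℝ) : ℝ := -x * Real.log x - (1-x) * Real.log (1-x)

/-!
Write `w x = x * (1 - x)`. Since `w z - w q = (2q - 1)² θ (1 - θ)`, the inequality reads
`h z - h q ≥ Φ q * (1 / w q - 1 / w z)` with `Φ = -h' / (1 / w)' = w² · logit / (2x - 1)`.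
The bound `logit x ≥ 2 (2x - 1)` makes `Φ` decreasing on `(1/2, 1)`, so `h + Φ q / w`, whose
derivative is `(1 / w)' · (Φ q - Φ x)`, is decreasing on `[1/2, q]`. The case `z < 1/2` follows
from the symmetry `h (1 - z) = h z`.
-/

open Real Set

lemma h_eq_binEntropy : h = binEntropy := by
  ext x
  simp only [h, binEntropy, log_inv]
  ring

lemma two_mul_le_log_one_add_sub_log_one_sub {u : ℝ} (hu0 : 0 ≤ u) (hu1 : u < 1) :
    2 * u ≤ log (1 + u) - log (1 - u) := by
  have hs := hasSum_log_sub_log_of_abs_lt_one (abs_lt.2 ⟨by linarith, hu1⟩)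
  simpa using le_hasSum hs 0 fun k _ => by positivity

lemma two_mul_two_mul_sub_one_le_log_sub_log {x : ℝ} (hx : 1 / 2 ≤ x) (hx1 : x < 1) :
    2 * (2 * x - 1) ≤ log x - log (1 - x) := by
  have hu := two_mul_le_log_one_add_sub_log_one_sub (u := 2 * x - 1) (by linarith) (by linarith)
  rwa [show 1 + (2 * x - 1) = 2 * x by ring, show 1 - (2 * x - 1) = 2 * (1 - x) by ring,
    log_mul two_ne_zero (by linarith), log_mul two_ne_zero (by linarith),
    add_sub_add_left_eq_sub] at hu

lemma hasDerivAt_mul_one_sub (x : ℝ) : HasDerivAt (fun y : ℝ => y * (1 - y)) (1 - 2 * x) x :=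
  ((hasDerivAt_id' x).mul ((hasDerivAt_id' x).const_sub 1)).congr_deriv (by ring)

noncomputable def phi (x : ℝ) : ℝ := (x * (1 - x)) ^ 2 * (log x - log (1 - x)) / (2 * x - 1)

lemma hasDerivAt_phi {x : ℝ} (hx : 1 / 2 < x) (hx1 : x < 1) :
    HasDerivAt phi (x * (1 - x) *
      ((2 * x - 1) - (log x - log (1 - x)) * (2 * (2 * x - 1) ^ 2 + 2 * (x * (1 - x))))
        / (2 * x - 1) ^ 2) x := by
  have hx0 : x ≠ 0 := by linarith
  have h1x : 1 - x ≠ 0 := by linarith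
  have hlogit : HasDerivAt (fun y => log y - log (1 - y)) (x⁻¹ + (1 - x)⁻¹) x :=
    ((hasDerivAt_log hx0).sub (((hasDerivAt_id' x).const_sub 1).log h1x)).congr_deriv (by ring)
  have hv : HasDerivAt (fun y : ℝ => 2 * y - 1) 2 x :=
    (((hasDerivAt_id' x).const_mul 2).sub_const 1).congr_deriv (by ring)
  refine ((((hasDerivAt_mul_one_sub x).pow 2).mul hlogit).div hv (by linarith)).congr_deriv ?_
  simp only [Pi.pow_apply, Pi.mul_apply]
  field_simp
  ring

lemma phi_antitoneOn : AntitoneOn phi (Ioo (1 / 2) 1) := by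
  refine antitoneOn_of_hasDerivWithinAt_nonpos (convex_Ioo _ _)
    (fun x hx => (hasDerivAt_phi hx.1 hx.2).continuousAt.continuousWithinAt)
    (fun x hx => (hasDerivAt_phi (interior_subset hx).1 (interior_subset hx).2).hasDerivWithinAt)
    fun x hx => ?_
  obtain ⟨hx, hx1⟩ := interior_subset hx
  have hlogit := two_mul_two_mul_sub_one_le_log_sub_log hx.le hx1
  have hw : 0 < x * (1 - x) := mul_pos (by linarith) (by linarith)
  refine div_nonpos_of_nonpos_of_nonneg (mul_nonpos_of_nonneg_of_nonpos hw.le ?_) (sq_nonneg _)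
  nlinarith [mul_le_mul_of_nonneg_right hlogit
    (by positivity : 0 ≤ 2 * (2 * x - 1) ^ 2 + 2 * (x * (1 - x)))]

lemma binEntropy_add_phi_div_antitoneOn {q : ℝ} (hq1 : q < 1) :
    AntitoneOn (fun x => binEntropy x + phi q / (x * (1 - x))) (Icc (1 / 2) q) := by
  have hderiv : ∀ x ∈ Icc (1 / 2) q, HasDerivAt (fun x => binEntropy x + phi q / (x * (1 - x)))
      (log (1 - x) - log x + phi q * (2 * x - 1) / (x * (1 - x)) ^ 2) x := by
    rintro x ⟨hx, hxq⟩
    have hw : x * (1 - x) ≠ 0 := (mul_pos (by linarith) (by linarith)).ne'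
    exact ((hasDerivAt_binEntropy (by linarith) (by linarith)).add
      ((hasDerivAt_const x (phi q)).div (hasDerivAt_mul_one_sub x) hw)).congr_deriv (by ring)
  refine antitoneOn_of_hasDerivWithinAt_nonpos (convex_Icc _ _)
    (fun x hx => (hderiv x hx).continuousAt.continuousWithinAt)
    (fun x hx => (hderiv x (interior_subset hx)).hasDerivWithinAt) fun x hx => ?_
  rw [interior_Icc] at hx
  obtain ⟨hx, hxq⟩ := hx
  have hw : 0 < x * (1 - x) := mul_pos (by linarith) (by linarith)
  have hphi : phi q ≤ phi x := phi_antitoneOn ⟨hx, hxq.trans hq1⟩ ⟨hx.trans hxq, hq1⟩ hxq.le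
  have hlogit : phi x * (2 * x - 1) / (x * (1 - x)) ^ 2 = log x - log (1 - x) := by
    rw [phi, div_mul_cancel₀ _ (by linarith), mul_div_cancel_left₀ _ (by positivity)]
  have hv : 0 ≤ 2 * x - 1 := by linarith
  have : phi q * (2 * x - 1) / (x * (1 - x)) ^ 2 ≤ phi x * (2 * x - 1) / (x * (1 - x)) ^ 2 := by
    gcongr
  linarith

lemma phi_mul_inv_sub_inv_le_binEntropy_sub {q z : ℝ} (hq1 : q < 1) (hz : 1 / 2 ≤ z)
    (hzq : z ≤ q) :
    phi q * ((q * (1 - q))⁻¹ - (z * (1 - z))⁻¹) ≤ binEntropy z - binEntropy q := by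
  have := binEntropy_add_phi_div_antitoneOn hq1 ⟨hz, hzq⟩ ⟨hz.trans hzq, le_rfl⟩ hzq
  simp only [div_eq_mul_inv] at this
  linarith [mul_sub (phi q) (q * (1 - q))⁻¹ (z * (1 - z))⁻¹]

lemma phi_mul_inv_sub_inv_le_binEntropy_sub_of_mem_Icc {q z : ℝ} (hq1 : q < 1)
    (hz : z ∈ Icc (1 - q) q) :
    phi q * ((q * (1 - q))⁻¹ - (z * (1 - z))⁻¹) ≤ binEntropy z - binEntropy q := by
  rcases le_total (1 / 2) z with hz' | hz'
  · exact phi_mul_inv_sub_inv_le_binEntropy_sub hq1 hz' hz.2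
  · have := phi_mul_inv_sub_inv_le_binEntropy_sub hq1 (z := 1 - z) (by linarith)
      (by linarith [hz.1])
    rwa [binEntropy_one_sub, sub_sub_cancel, mul_comm (1 - z)] at this

theorem main_ineq (q θ : ℝ) (hq : 1/2 ≤ q) (hq1 : q < 1)
    (hθ0 : 0 ≤ θ) (hθ1 : θ ≤ 1) :
    θ*(1-θ)*(2*q-1)*(1-q) / ((q*θ + (1-q)*(1-θ)) * (1 - (q*θ + (1-q)*(1-θ))))
      ≤ (h (q*θ + (1-q)*(1-θ)) - h q) / (q * Real.log (q/(1-q))) := by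
  rcases hq.eq_or_lt with rfl | hq'
  · norm_num
  have hv : 2 * q - 1 ≠ 0 := by linarith
  have h1q : 1 - q ≠ 0 := by linarith
  have hθ : θ * (1 - θ) = ((q*θ + (1-q)*(1-θ)) * (1 - (q*θ + (1-q)*(1-θ))) - q * (1 - q))
      / (2 * q - 1) ^ 2 := by
    rw [eq_div_iff (pow_ne_zero 2 hv)]
    ring
  have hz : q*θ + (1-q)*(1-θ) ∈ Icc (1 - q) q := ⟨by nlinarith, by nlinarith⟩
  rw [hθ, h_eq_binEntropy]
  generalize q*θ + (1-q)*(1-θ) = z at hz ⊢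
  have hz0 : z ≠ 0 := by linarith [hz.1]
  have hz1 : 1 - z ≠ 0 := by linarith [hz.2]
  have hlog : 0 < log (q / (1 - q)) := log_pos ((one_lt_div (by linarith)).2 (by linarith))
  rw [le_div_iff₀ (by positivity), log_div (by linarith) (by linarith)]
  refine le_of_eq_of_le ?_ (phi_mul_inv_sub_inv_le_binEntropy_sub_of_mem_Icc hq1 hz)
  rw [phi]
  field_simp
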